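/- arXiv:1905.05220 — 5 statements merged into one kernel-verified Lean document; each statement's English description precedes it below -/
import Mathlib

section
/- (Coverage Bound) For a deterministic ND protocol with reception period T_C, total window length Σ d_k per period, beacon length ω, and transmission duty-cycle β, the worst-case latency satisfies L ≥ ⌈T_C / Σ_{k=1}^{n_C} d_k⌉ · (ω/β). Formally: given M = ⌈T_C / Σ d_k⌉ and average beacon gap λ̄ = ω/β, the supremum over windows of M consecutive beacon gaps of their sum is at least M·ω/β. -/
/-!
If every window of `M` consecutive gaps summed to at most `M · c - ε`, then cutting the first
`k · M` gaps into `k` such windows would bound their average by `c - ε / M` for every `k`, so the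
Cesàro limit `c` of the gaps could not be reached.
-/

open Filter

theorem sum_range_mul_le_of_forall_sum_window_le {M : ℕ} {l : ℕ → ℝ} {s : ℝ}
    (h : ∀ j, ∑ i ∈ Finset.range M, l (j + i) ≤ s) (k : ℕ) :
    ∑ i ∈ Finset.range (k * M), l i ≤ k * s := by
  induction k with
  | zero => simp
  | succ k ih =>
    rw [add_mul, one_mul, Finset.sum_range_add]
    push_cast
    linarith [h (k * M)]

theorem mul_le_of_tendsto_cesaro_of_forall_sum_window_le {M : ℕ} (hM : 0 < M) {l : ℕ → ℝ}
    {c s : ℝ}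
    (hces : Tendsto (fun n : ℕ => (∑ i ∈ Finset.range n, l i) / n) atTop (nhds c))
    (h : ∀ j, ∑ i ∈ Finset.range M, l (j + i) ≤ s) :
    M * c ≤ s := by
  have hMpos : (0 : ℝ) < M := by exact_mod_cast hM
  have hblocks : Tendsto (fun k : ℕ => k * M) atTop atTop :=
    tendsto_id.atTop_mul_const' hM
  have hle : c ≤ s / M := by
    refine le_of_tendsto (hces.comp hblocks) ?_
    filter_upwards [eventually_ge_atTop 1] with k hk
    have hkpos : (0 : ℝ) < k := by exact_mod_cast hk
    simp only [Function.comp_apply, Nat.cast_mul]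
    rw [div_le_div_iff₀ (by positivity) hMpos]
    nlinarith [sum_range_mul_le_of_forall_sum_window_le h k]
  rwa [le_div_iff₀ hMpos, mul_comm] at hle

theorem coverage_bound_general (ω β : ℝ)
    (l : ℕ → ℝ)
    (hces : Tendsto (fun n : ℕ => (∑ i ∈ Finset.range n, l i) / n) atTop
      (nhds (ω / β)))
    (M : ℕ) :
    ∀ ε : ℝ, 0 < ε →
      ∃ j : ℕ, (M : ℝ) * (ω / β) - ε < ∑ i ∈ Finset.range M, l (j + i) := by
  intro ε hε
  rcases Nat.eq_zero_or_pos M with rfl | hM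
  · exact ⟨0, by simpa using hε⟩
  by_contra! hwindows
  linarith [mul_le_of_tendsto_cesaro_of_forall_sum_window_le hM hces hwindows]

/-- Coverage Bound: for a deterministic protocol with beacon gaps of Cesàro average
`ω/β` and `M = ⌈T_C / Σ d_k⌉` beacons needed per window, the worst-case latency
(the supremum of sums of `M` consecutive gaps) is at least `M · ω/β`. -/
theorem coverage_bound (T d ω β : ℝ) (hT : 0 < T) (hd : 0 < d)
    (hω : 0 < ω) (hβ : 0 < β)
    (l : ℕ → ℝ) (hl : ∀ i, 0 < l i)
    (hces : Tendsto (fun n : ℕ => (∑ i ∈ Finset.range n, l i) / n) atTop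
      (nhds (ω / β)))
    (M : ℕ) (hM : (M : ℤ) = ⌈T / d⌉) :
    ∀ ε : ℝ, 0 < ε →
      ∃ j : ℕ, (M : ℝ) * (ω / β) - ε < ∑ i ∈ Finset.range M, l (j + i) :=
  coverage_bound_general ω β l hces M
end

section
/- (Asymmetric Bound) For two devices with duty-cycles η_E, η_F ∈ (0, 1] such that 2/η_E and 2/η_F are positive integers, setting β_E = η_E/(2α), γ_E = η_E/2, β_F = η_F/(2α), γ_F = η_F/2 yields equal one-way latencies L_E = ω/(γ_E·β_F) = L_F = ω/(γ_F·β_E) = 4·α·ω/(η_E·η_F), and this is the minimum of max(L_E, L_F) over all splits β_E ∈ (0, η_E/α), β_F ∈ (0, η_F/α) with γ_E = η_E − α·β_E, γ_F = η_F − α·β_F. -/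
/-!
On each device `γ·β = (η - α·β)·β ≤ η² / (4α)` (AM–GM), so the product of the two
denominators `γ_E·β_F` and `γ_F·β_E` is at most `(η_E·η_F / (4α))²`. Hence one of them is at
most `η_E·η_F / (4α)`, and the corresponding one-way latency is at least `4·α·ω / (η_E·η_F)`,
which the balanced split `β = η / (2α)` attains.
-/

theorem sub_mul_mul_self_le_sq_div {K : Type*} [Field K] [LinearOrder K] [IsStrictOrderedRing K]
    {a : K} (ha : 0 < a) (η b : K) : (η - a * b) * b ≤ η ^ 2 / (4 * a) := by
  rw [le_div_iff₀ (by positivity)]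
  nlinarith [sq_nonneg (η - 2 * a * b)]

theorem le_or_le_of_mul_le_sq {R : Type*} [Semiring R] [LinearOrder R] [IsStrictOrderedRing R]
    {x y B : R} (hB : 0 ≤ B) (h : x * y ≤ B ^ 2) : x ≤ B ∨ y ≤ B := by
  by_contra! hlt
  exact (sq B ▸ h).not_gt (mul_lt_mul'' hlt.1 hlt.2 hB hB)

theorem div_le_max_div_of_mul_le_sq {K : Type*} [Field K] [LinearOrder K] [IsStrictOrderedRing K]
    {ω x y B : K} (hω : 0 ≤ ω) (hx : 0 < x) (hy : 0 < y) (hB : 0 ≤ B) (h : x * y ≤ B ^ 2) :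
    ω / B ≤ max (ω / x) (ω / y) := by
  rcases le_or_le_of_mul_le_sq hB h with hxB | hyB
  · exact le_max_of_le_left (div_le_div_of_nonneg_left hω hx hxB)
  · exact le_max_of_le_right (div_le_div_of_nonneg_left hω hy hyB)

theorem asymmetric_bound_general (α ω ηE ηF : ℝ) (hα : 0 < α) (hω : 0 < ω) :
    (ω / ((ηE / 2) * (ηF / (2 * α))) = 4 * α * ω / (ηE * ηF)) ∧
    (ω / ((ηF / 2) * (ηE / (2 * α))) = 4 * α * ω / (ηE * ηF)) ∧
    (∀ βE ∈ Set.Ioo (0 : ℝ) (ηE / α), ∀ βF ∈ Set.Ioo (0 : ℝ) (ηF / α),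
      4 * α * ω / (ηE * ηF) ≤
        max (ω / ((ηE - α * βE) * βF)) (ω / ((ηF - α * βF) * βE))) := by
  refine ⟨by simp only [div_eq_mul_inv, mul_inv, inv_inv]; ring,
    by simp only [div_eq_mul_inv, mul_inv, inv_inv]; ring, ?_⟩
  rintro βE ⟨hβE, hβηE⟩ βF ⟨hβF, hβηF⟩
  have hγE : 0 < ηE - α * βE := sub_pos.2 ((lt_div_iff₀' hα).1 hβηE)
  have hγF : 0 < ηF - α * βF := sub_pos.2 ((lt_div_iff₀' hα).1 hβηF)
  have hηE : 0 < ηE := by nlinarith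
  have hηF : 0 < ηF := by nlinarith
  rw [show 4 * α * ω / (ηE * ηF) = ω / (ηE * ηF / (4 * α)) by field_simp]
  refine div_le_max_div_of_mul_le_sq hω.le (mul_pos hγE hβF) (mul_pos hγF hβE) (by positivity) ?_
  calc (ηE - α * βE) * βF * ((ηF - α * βF) * βE)
      = (ηE - α * βE) * βE * ((ηF - α * βF) * βF) := by ring
    _ ≤ ηE ^ 2 / (4 * α) * (ηF ^ 2 / (4 * α)) :=
        mul_le_mul (sub_mul_mul_self_le_sq_div hα ηE βE) (sub_mul_mul_self_le_sq_div hα ηF βF)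
          (mul_pos hγF hβF).le (by positivity)
    _ = (ηE * ηF / (4 * α)) ^ 2 := by ring

/-- Asymmetric Bound: with `2/η_E` and `2/η_F` positive integers, the split
`β = η/(2α)`, `γ = η/2` on each device gives equal one-way latencies
`4·α·ω/(η_E·η_F)`, and this is the minimum of `max(L_E, L_F)` over all splits. -/
theorem asymmetric_bound (α ω ηE ηF : ℝ) (hα : 0 < α) (hω : 0 < ω)
    (hηE : ηE ∈ Set.Ioc (0 : ℝ) 1) (hηF : ηF ∈ Set.Ioc (0 : ℝ) 1)
    (hkE : ∃ kE : ℕ, 0 < kE ∧ (2 : ℝ) / ηE = kE)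
    (hkF : ∃ kF : ℕ, 0 < kF ∧ (2 : ℝ) / ηF = kF) :
    (ω / ((ηE / 2) * (ηF / (2 * α))) = 4 * α * ω / (ηE * ηF)) ∧
    (ω / ((ηF / 2) * (ηE / (2 * α))) = 4 * α * ω / (ηE * ηF)) ∧
    (∀ βE ∈ Set.Ioo (0 : ℝ) (ηE / α), ∀ βF ∈ Set.Ioo (0 : ℝ) (ηF / α),
      4 * α * ω / (ηE * ηF) ≤
        max (ω / ((ηE - α * βE) * βF)) (ω / ((ηF - α * βF) * βE))) :=
  asymmetric_bound_general α ω ηE ηF hα hω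
end

section
/- In an optimal asymmetric ND protocol, the two one-way latencies must be equal: if L_F = ω/(γ_F·β_E) and L_E = ω/(γ_E·β_F) and the pair (β_E, γ_E, β_F, γ_F) minimizes max(L_E, L_F) subject to α·β_E + γ_E = η_E and α·β_F + γ_F = η_F with all quantities positive, then L_E = L_F. Consequently γ_F/γ_E = β_F/β_E. -/
/-!
If `L_E > L_F`, i.e. `γ_E β_F < γ_F β_E`, device `F` can move part of its budget from `γ_F` to
`β_F`: lowering `γ_F` to the midpoint value `(γ_F β_E + γ_E β_F) / (2 β_E)` keeps `L_F` below
the old `L_E`, while the larger `β_F` strictly lowers `L_E`. So an unequal pair is never a minimizer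
of `max(L_E, L_F)`, and the case `L_F > L_E` is the same with the devices swapped.
-/

lemma exists_budget_shift_lt_max_latency {α ω βE γE βF γF : ℝ} (hα : 0 < α) (hω : 0 < ω)
    (hβE : 0 < βE) (hγE : 0 < γE) (hβF : 0 < βF) (hγF : 0 < γF)
    (h : γE * βF < γF * βE) :
    ∃ βF' γF' : ℝ, 0 < βF' ∧ 0 < γF' ∧ α * βF' + γF' = α * βF + γF ∧
      max (ω / (γE * βF')) (ω / (γF' * βE)) < max (ω / (γE * βF)) (ω / (γF * βE)) := by
  set γF' := (γF * βE + γE * βF) / (2 * βE)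
  have hγF'_pos : 0 < γF' := by positivity
  have hγF'_mul : γF' * βE = (γF * βE + γE * βF) / 2 := by
    simp only [γF']; field_simp
  have hγF'_lt : γF' < γF := by
    rw [div_lt_iff₀ (by positivity)]; linarith
  have hβF_lt : βF < βF + (γF - γF') / α := lt_add_of_pos_right _ (by bound)
  refine ⟨βF + (γF - γF') / α, γF', by linarith, hγF'_pos, by field_simp; ring, ?_⟩
  rw [max_eq_left (div_le_div_of_nonneg_left hω.le (by positivity) h.le)]
  apply max_lt
  · exact div_lt_div_of_pos_left hω (by positivity) (by gcongr)
  · exact div_lt_div_of_pos_left hω (by positivity) (by linarith)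

theorem asymmetric_optimum_equalizes_general (α ω ηE ηF : ℝ) (hα : 0 < α) (hω : 0 < ω)
    (βE γE βF γF : ℝ)
    (hβE : 0 < βE) (hγE : 0 < γE) (hβF : 0 < βF) (hγF : 0 < γF)
    (hbudE : α * βE + γE = ηE) (hbudF : α * βF + γF = ηF)
    (hmin : ∀ βE' γE' βF' γF' : ℝ,
      0 < βE' → 0 < γE' → 0 < βF' → 0 < γF' →
      α * βE' + γE' = ηE → α * βF' + γF' = ηF →
      max (ω / (γE * βF)) (ω / (γF * βE)) ≤
        max (ω / (γE' * βF')) (ω / (γF' * βE'))) :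
    ω / (γE * βF) = ω / (γF * βE) ∧ γF / γE = βF / βE := by
  have key : γE * βF = γF * βE := by
    rcases lt_trichotomy (γE * βF) (γF * βE) with h | h | h
    · obtain ⟨βF', γF', hβF', hγF', hbud, hlt⟩ :=
        exists_budget_shift_lt_max_latency hα hω hβE hγE hβF hγF h
      exact absurd (hmin βE γE βF' γF' hβE hγE hβF' hγF' hbudE (hbud.trans hbudF)) hlt.not_ge
    · exact h
    · obtain ⟨βE', γE', hβE', hγE', hbud, hlt⟩ :=
        exists_budget_shift_lt_max_latency hα hω hβF hγF hβE hγE h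
      rw [max_comm, max_comm (ω / (γF * βE))] at hlt
      exact absurd (hmin βE' γE' βF γF hβE' hγE' hβF hγF (hbud.trans hbudE) hbudF) hlt.not_ge
  refine ⟨by rw [key], ?_⟩
  rw [div_eq_div_iff hγE.ne' hβE.ne']
  linarith

/-- In an optimal asymmetric ND protocol the two one-way latencies are equal:
a minimizer of `max(L_E, L_F)` under the duty-cycle budgets satisfies
`L_E = L_F`, hence `γ_F/γ_E = β_F/β_E`. -/
theorem asymmetric_optimum_equalizes (α ω ηE ηF : ℝ) (hα : 0 < α) (hω : 0 < ω)
    (hηE : 0 < ηE) (hηF : 0 < ηF)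
    (βE γE βF γF : ℝ)
    (hβE : 0 < βE) (hγE : 0 < γE) (hβF : 0 < βF) (hγF : 0 < γF)
    (hbudE : α * βE + γE = ηE) (hbudF : α * βF + γF = ηF)
    (hmin : ∀ βE' γE' βF' γF' : ℝ,
      0 < βE' → 0 < γE' → 0 < βF' → 0 < γF' →
      α * βE' + γE' = ηE → α * βF' + γF' = ηF →
      max (ω / (γE * βF)) (ω / (γF * βE)) ≤
        max (ω / (γE' * βF')) (ω / (γF' * βE'))) :
    ω / (γE * βF) = ω / (γF * βE) ∧ γF / γE = βF / βE :=
  asymmetric_optimum_equalizes_general α ω ηE ηF hα hω βE γE βF γF hβE hγE hβF hγF hbudE hbudF hmin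
end

section
/- The slotted-protocol duty-cycle constraint implies the latency bound L ≥ ω·(1 + 2α + α²)/η² = ω·(1+α)²/η²: if η = k·(ω + α·ω)/L (slot length I = ω) and k ≥ √(L/ω) with k, L, ω, α, η > 0, then L ≥ ω·(1 + α)²/η². Moreover, for α = 1 this equals 4ω/η². -/
/-! Squaring `η·L = k·ω·(1 + α)` and using `k² ≥ L/ω` gives `η²·L² ≥ L·ω·(1 + α)²`;
dividing by `L·η²` yields the bound. -/

lemma le_mul_sq_of_sqrt_div_le {L ω k : ℝ} (hω : 0 < ω) (h : Real.sqrt (L / ω) ≤ k) :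
    L ≤ ω * k ^ 2 :=
  (div_le_iff₀' hω).mp (Real.sqrt_le_iff.mp h).2

theorem slotted_latency_bound_general (k L ω α η : ℝ) (hL : 0 < L)
    (hω : 0 < ω) (hη : 0 < η)
    (hduty : η = k * (ω + α * ω) / L)
    (hsqrt : Real.sqrt (L / ω) ≤ k) :
    ω * (1 + α) ^ 2 / η ^ 2 ≤ L ∧
    (α = 1 → ω * (1 + α) ^ 2 / η ^ 2 = 4 * ω / η ^ 2) := by
  refine ⟨?_, fun hα => by rw [hα]; ring⟩
  have hηL : η * L = k * ω * (1 + α) := by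
    rw [hduty, div_mul_cancel₀ _ hL.ne']
    ring
  have key : ω * (1 + α) ^ 2 * L ≤ L * η ^ 2 * L :=
    calc ω * (1 + α) ^ 2 * L ≤ ω * (1 + α) ^ 2 * (ω * k ^ 2) :=
          mul_le_mul_of_nonneg_left (le_mul_sq_of_sqrt_div_le hω hsqrt) (by positivity)
      _ = (η * L) ^ 2 := by rw [hηL]; ring
      _ = L * η ^ 2 * L := by ring
  rw [div_le_iff₀ (by positivity)]
  exact le_of_mul_le_mul_right key hL

/-- Slotted-protocol latency bound: with slot length `I = ω`, duty-cycle
`η = k·(ω + α·ω)/L` and the requirement `k ≥ √(L/ω)`, the latency satisfies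
`L ≥ ω·(1 + α)²/η²`; for `α = 1` this is `4ω/η²`. -/
theorem slotted_latency_bound (k L ω α η : ℝ) (hk : 0 < k) (hL : 0 < L)
    (hω : 0 < ω) (hα : 0 < α) (hη : 0 < η)
    (hduty : η = k * (ω + α * ω) / L)
    (hsqrt : Real.sqrt (L / ω) ≤ k) :
    ω * (1 + α) ^ 2 / η ^ 2 ≤ L ∧
    (α = 1 → ω * (1 + α) ^ 2 / η ^ 2 = 4 * ω / η ^ 2) :=
  slotted_latency_bound_general k L ω α η hL hω hη hduty hsqrt
end

section
/- (Mutual-Exclusive One-Way Bound) For fixed η, ω, α > 0, define g(k) = k²·ω·α/(k·η − 1/2) for real k > 1/(2η). Then g has a unique global minimum on (1/(2η), ∞) at k = 1/η with minimum value 2·α·ω/η² — half of the bidirectional symmetric bound 4·α·ω/η². Moreover, the minimum over integers k > 1/(2η) is attained at ⌈1/η⌉ or ⌊1/η⌋. -/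
/-!
Writing `g(k) = k²ωα/(kη − 1/2)`, one has the identity
`g(b) − g(a) = ωα (b − a)(abη − (a + b)/2) / ((aη − 1/2)(bη − 1/2))`.
The second factor is nonnegative when `a, b ≥ 1/η` and nonpositive when `a, b ≤ 1/η`, so `g`
decreases up to `1/η` and increases afterwards; at `a = 1/η` the identity reads
`g(b) − g(1/η) = ωα (b − 1/η)² / (bη − 1/2)`, which gives the strict global minimum.
An integer `n` in the domain then lies either below `⌊1/η⌋` or above `⌈1/η⌉`.
-/

open Set

section FloorCeil

variable {α β : Type*} [Ring α] [LinearOrder α] [IsStrictOrderedRing α] [FloorRing α]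
  [LinearOrder β]

theorem min_apply_ceil_apply_floor_le {f : α → β} {a x : α}
    (hanti : AntitoneOn f (Ioc a x)) (hmono : MonotoneOn f (Ici x)) {n : ℤ} (hn : a < n) :
    min (f ⌈x⌉) (f ⌊x⌋) ≤ f n := by
  rcases le_or_gt (n : α) x with hnx | hxn
  · have hn_floor : (n : α) ≤ ⌊x⌋ := mod_cast Int.le_floor.mpr hnx
    exact (min_le_right _ _).trans (hanti ⟨hn, hnx⟩ ⟨hn.trans_le hn_floor, Int.floor_le x⟩
      hn_floor)
  · have hceil_n : (⌈x⌉ : α) ≤ n := mod_cast Int.ceil_le.mpr hxn.le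
    exact (min_le_left _ _).trans (hmono (Int.le_ceil x) (mem_Ici.mpr hxn.le) hceil_n)

end FloorCeil

noncomputable def mutualExclusiveLatency (η ω α k : ℝ) : ℝ := k ^ 2 * ω * α / (k * η - 1 / 2)

namespace mutualExclusiveLatency

variable {η ω α : ℝ}

theorem denom_pos (hη : 0 < η) {k : ℝ} (hk : 1 / (2 * η) < k) : 0 < k * η - 1 / 2 := by
  rw [div_lt_iff₀ (by positivity)] at hk
  linarith

theorem apply_inv (hη : η ≠ 0) : mutualExclusiveLatency η ω α (1 / η) = 2 * α * ω / η ^ 2 := by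
  unfold mutualExclusiveLatency
  field_simp
  ring

theorem sub_eq {a b : ℝ} (ha : a * η - 1 / 2 ≠ 0) (hb : b * η - 1 / 2 ≠ 0) :
    mutualExclusiveLatency η ω α b - mutualExclusiveLatency η ω α a =
      ω * α * (b - a) * (a * b * η - (a + b) / 2) / ((a * η - 1 / 2) * (b * η - 1 / 2)) := by
  rw [mutualExclusiveLatency, mutualExclusiveLatency, div_sub_div _ _ hb ha,
    mul_comm (b * η - 1 / 2)]
  ring

theorem antitoneOn (hη : 0 < η) (hωα : 0 ≤ ω * α) :
    AntitoneOn (mutualExclusiveLatency η ω α) (Ioc (1 / (2 * η)) (1 / η)) := by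
  intro a ⟨ha, haη⟩ b ⟨hb, hbη⟩ hab
  have hda := denom_pos hη ha
  have hdb := denom_pos hη hb
  rw [le_div_iff₀ hη] at haη hbη
  have ha0 : 0 < a := by nlinarith
  have hfactor : a * b * η - (a + b) / 2 ≤ 0 := by nlinarith
  rw [← sub_nonpos, sub_eq hda.ne' hdb.ne']
  exact div_nonpos_of_nonpos_of_nonneg
    (mul_nonpos_of_nonneg_of_nonpos (mul_nonneg hωα (sub_nonneg.2 hab)) hfactor) (by positivity)

theorem monotoneOn (hη : 0 < η) (hωα : 0 ≤ ω * α) :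
    MonotoneOn (mutualExclusiveLatency η ω α) (Ici (1 / η)) := by
  intro a haη b hbη hab
  rw [mem_Ici, div_le_iff₀ hη] at haη hbη
  have hda : 0 < a * η - 1 / 2 := by linarith
  have hdb : 0 < b * η - 1 / 2 := by linarith
  have ha0 : 0 < a := by nlinarith
  have hfactor : 0 ≤ a * b * η - (a + b) / 2 := by nlinarith
  rw [← sub_nonneg, sub_eq hda.ne' hdb.ne']
  exact div_nonneg (mul_nonneg (mul_nonneg hωα (sub_nonneg.2 hab)) hfactor) (by positivity)

theorem apply_inv_lt (hη : 0 < η) (hωα : 0 < ω * α) {k : ℝ} (hk : 1 / (2 * η) < k)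
    (hk_ne : k ≠ 1 / η) :
    mutualExclusiveLatency η ω α (1 / η) < mutualExclusiveLatency η ω α k := by
  have hd := denom_pos hη hk
  have hinv : 1 / η * η - 1 / 2 = 1 / 2 := by field_simp; norm_num
  rw [← sub_pos, sub_eq (by rw [hinv]; norm_num) hd.ne', hinv]
  have hsq : 0 < (k - 1 / η) ^ 2 := by positivity [sub_ne_zero.2 hk_ne]
  have hfactor : 1 / η * k * η - (1 / η + k) / 2 = (k - 1 / η) / 2 := by field_simp; ring
  rw [hfactor]
  exact div_pos (by nlinarith [mul_pos hωα hsq]) (by positivity)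

end mutualExclusiveLatency

open mutualExclusiveLatency in
theorem mutual_exclusive_bound_general (η ω α : ℝ) (hη : 0 < η) (hω : 0 < ω)
    (hα : 0 < α) :
    ((1 / η) ^ 2 * ω * α / ((1 / η) * η - 1 / 2) = 2 * α * ω / η ^ 2) ∧
    (∀ k ∈ Set.Ioi (1 / (2 * η)), k ≠ 1 / η →
      2 * α * ω / η ^ 2 < k ^ 2 * ω * α / (k * η - 1 / 2)) ∧
    (∀ n : ℤ, 1 / (2 * η) < (n : ℝ) →
      min ((⌈1 / η⌉ : ℝ) ^ 2 * ω * α / ((⌈1 / η⌉ : ℝ) * η - 1 / 2))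
          ((⌊1 / η⌋ : ℝ) ^ 2 * ω * α / ((⌊1 / η⌋ : ℝ) * η - 1 / 2))
        ≤ (n : ℝ) ^ 2 * ω * α / ((n : ℝ) * η - 1 / 2)) := by
  have hωα : 0 < ω * α := mul_pos hω hα
  refine ⟨apply_inv hη.ne', fun k hk hk_ne => ?_, fun n hn => ?_⟩
  · rw [← apply_inv (ω := ω) (α := α) hη.ne']
    exact apply_inv_lt hη hωα hk hk_ne
  · exact min_apply_ceil_apply_floor_le (antitoneOn hη hωα.le) (monotoneOn hη hωα.le) hn

/-- Mutual-exclusive one-way bound: `g(k) = k²·ω·α/(k·η − 1/2)` on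
`(1/(2η), ∞)` has unique global minimum `2·α·ω/η²` at `k = 1/η`, and the
minimum over integers in the domain is attained at `⌈1/η⌉` or `⌊1/η⌋`. -/
theorem mutual_exclusive_bound (η ω α : ℝ) (hη : 0 < η) (hω : 0 < ω)
    (hα : 0 < α)
    (hfloor : 1 / (2 * η) < (⌊1 / η⌋ : ℝ)) :
    ((1 / η) ^ 2 * ω * α / ((1 / η) * η - 1 / 2) = 2 * α * ω / η ^ 2) ∧
    (∀ k ∈ Set.Ioi (1 / (2 * η)), k ≠ 1 / η →
      2 * α * ω / η ^ 2 < k ^ 2 * ω * α / (k * η - 1 / 2)) ∧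
    (∀ n : ℤ, 1 / (2 * η) < (n : ℝ) →
      min ((⌈1 / η⌉ : ℝ) ^ 2 * ω * α / ((⌈1 / η⌉ : ℝ) * η - 1 / 2))
          ((⌊1 / η⌋ : ℝ) ^ 2 * ω * α / ((⌊1 / η⌋ : ℝ) * η - 1 / 2))
        ≤ (n : ℝ) ^ 2 * ω * α / ((n : ℝ) * η - 1 / 2)) :=
  mutual_exclusive_bound_general η ω α hη hω hα
end
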